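/- arXiv:1007.2769 — 2 statements merged into one kernel-verified Lean document; each statement's English description precedes it below -/
import Mathlib

section
/- Two involutions v, w of the hyperoctahedral group B_n = G(2,n) are S_n-conjugate (i.e. there exists τ ∈ Perm(Fin n) with w = τ·v·τ⁻¹ under absolute conjugation) if and only if fix_0(v) = fix_0(w), fix_1(v) = fix_1(w), pair_0(v) = pair_0(w) and pair_1(v) = pair_1(w). -/
noncomputable section

/-- The wreath product `G(r,n) = C_r ≀ S_n`, realized as pairs of a color vector
`z : Fin n → ZMod r` and a permutation `p` of `Fin n`. -/
@[ext] structure WreathG (r n : ℕ) where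
  z : Fin n → ZMod r
  p : Equiv.Perm (Fin n)

namespace WreathG

variable {r n : ℕ}

instance : One (WreathG r n) := ⟨⟨0, 1⟩⟩
instance : Mul (WreathG r n) := ⟨fun g h => ⟨g.z + h.z ∘ g.p.symm, g.p * h.p⟩⟩
instance : Inv (WreathG r n) := ⟨fun g => ⟨-(g.z ∘ g.p), g.p⁻¹⟩⟩

@[simp] theorem one_z : (1 : WreathG r n).z = 0 := rfl
@[simp] theorem one_p : (1 : WreathG r n).p = 1 := rfl
@[simp] theorem mul_z (a b : WreathG r n) : (a * b).z = a.z + b.z ∘ a.p.symm := rfl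
@[simp] theorem mul_p (a b : WreathG r n) : (a * b).p = a.p * b.p := rfl
@[simp] theorem inv_z (a : WreathG r n) : (a⁻¹).z = -(a.z ∘ a.p) := rfl
@[simp] theorem inv_p (a : WreathG r n) : (a⁻¹).p = a.p⁻¹ := rfl

instance : Group (WreathG r n) :=
  Group.ofLeftAxioms
    (fun a b c => by
      refine WreathG.ext ?_ (mul_assoc a.p b.p c.p)
      funext x
      show (a.z x + b.z (a.p.symm x)) + c.z ((a.p * b.p).symm x)
          = a.z x + (b.z (a.p.symm x) + c.z (b.p.symm (a.p.symm x)))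
      have h : (a.p * b.p).symm x = b.p.symm (a.p.symm x) := rfl
      rw [h, add_assoc])
    (fun a => by
      refine WreathG.ext ?_ (one_mul a.p)
      funext x
      show 0 + a.z ((1 : Equiv.Perm (Fin n)).symm x) = a.z x
      simp; rfl)
    (fun a => by
      refine WreathG.ext ?_ (inv_mul_cancel a.p)
      funext x
      show -(a.z (a.p x)) + a.z ((a.p⁻¹).symm x) = 0
      have h : (a.p⁻¹).symm x = a.p x := rfl
      rw [h, neg_add_cancel])

/-- An absolute involution of `G(r,n)`: `|v|² = 1` and `z ∘ |v| = z`. -/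
def IsAbsInv (v : WreathG r n) : Prop := v.p ^ 2 = 1 ∧ v.z ∘ v.p = v.z

instance (v : WreathG r n) : Decidable (IsAbsInv v) :=
  inferInstanceAs (Decidable (_ ∧ _))

/-- Absolute conjugation `τ·(z,σ)·τ⁻¹ = (z ∘ τ⁻¹, τστ⁻¹)`. -/
def aconj (τ : Equiv.Perm (Fin n)) (v : WreathG r n) : WreathG r n :=
  ⟨v.z ∘ τ.symm, τ * v.p * τ⁻¹⟩

theorem IsAbsInv.aconj {v : WreathG r n} (h : IsAbsInv v) (τ : Equiv.Perm (Fin n)) :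
    IsAbsInv (WreathG.aconj τ v) := by
  obtain ⟨h1, h2⟩ := h
  constructor
  · show (τ * v.p * τ⁻¹) ^ 2 = 1
    have key : (τ * v.p * τ⁻¹) * (τ * v.p * τ⁻¹) = τ * (v.p * v.p) * τ⁻¹ := by
      simp [mul_assoc]
    rw [sq, key, ← sq, h1, mul_one, mul_inv_cancel]
  · funext x
    have := congrFun h2 (τ.symm x)
    simpa [WreathG.aconj, Function.comp] using this

/-- `⟨g,v⟩ = ∑ i z_i(g)·z_i(v) ∈ ZMod r`. -/
def pairing (g v : WreathG r n) : ZMod r := ∑ i, g.z i * v.z i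

/-- `inv_v(g)`: the number of pairs `i < j` with `|v|(i) = j` and `|g|(i) > |g|(j)`. -/
def invv (v g : WreathG r n) : ℕ :=
  Nat.card {q : Fin n × Fin n // q.1 < q.2 ∧ v.p q.1 = q.2 ∧ g.p q.2 < g.p q.1}

/-- The number of inversions of a permutation. -/
def invPerm (σ : Equiv.Perm (Fin n)) : ℕ :=
  Nat.card {q : Fin n × Fin n // q.1 < q.2 ∧ σ q.2 < σ q.1}

/-- `fix_i(v)`: the number of `j` with `|v|(j) = j` and `z_j(v) = i`. -/
def fixc (v : WreathG r n) (i : ZMod r) : ℕ :=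
  Nat.card {j : Fin n // v.p j = j ∧ v.z j = i}

/-- `pair_i(v)`: the number of pairs `j < k` with `|v|(j) = k` and `z_j(v) = z_k(v) = i`. -/
def pairc (v : WreathG r n) (i : ZMod r) : ℕ :=
  Nat.card {q : Fin n × Fin n // q.1 < q.2 ∧ v.p q.1 = q.2 ∧ v.z q.1 = i ∧ v.z q.2 = i}

instance : DecidableEq (WreathG r n) := fun a b =>
  decidable_of_iff (a.z = b.z ∧ a.p = b.p)
    (by constructor
        · rintro ⟨h1, h2⟩; exact WreathG.ext h1 h2
        · rintro rfl; exact ⟨rfl, rfl⟩)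

instance [NeZero r] : Fintype (WreathG r n) :=
  Fintype.ofEquiv ((Fin n → ZMod r) × Equiv.Perm (Fin n))
    { toFun := fun x => ⟨x.1, x.2⟩
      invFun := fun g => (g.z, g.p)
      left_inv := fun _ => rfl
      right_inv := fun _ => rfl }

end WreathG

/-- The set `I(r,n)` of absolute involutions, as a subtype. -/
abbrev AbsInv (r n : ℕ) := {v : WreathG r n // WreathG.IsAbsInv v}

/-- The model space `M`: the complex vector space with basis `{C_v : v ∈ I(r,n)}`. -/
abbrev ModelSpace (r n : ℕ) := AbsInv r n →₀ ℂ

/-- `ζ_r = exp(2πi/r)`. -/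
def zetaC (r : ℕ) : ℂ := Complex.exp (2 * Real.pi * Complex.I / r)

/-- `ζ_r` raised to an exponent in `ZMod r` (well defined since `ζ_r^r = 1`). -/
def zetaPow (r : ℕ) (a : ZMod r) : ℂ := zetaC r ^ a.val

/-- The Gelfand model operator `ϱ(g) C_v = ζ_r^{⟨g,v⟩} (−1)^{inv_v(g)} C_{|g|v|g|⁻¹}`. -/
def modelRho {r n : ℕ} (g : WreathG r n) :
    ModelSpace r n →ₗ[ℂ] ModelSpace r n :=
  Finsupp.lsum ℂ fun v =>
    ((zetaPow r (WreathG.pairing g v.1) * (-1 : ℂ) ^ WreathG.invv v.1 g) •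
      Finsupp.lsingle (⟨WreathG.aconj g.p v.1, v.2.aconj g.p⟩ : AbsInv r n))

/-- The auxiliary operator `φ(g) C_v = ζ_r^{⟨g,v⟩} C_{|g|v|g|⁻¹}`. -/
def modelPhi {r n : ℕ} (g : WreathG r n) :
    ModelSpace r n →ₗ[ℂ] ModelSpace r n :=
  Finsupp.lsum ℂ fun v =>
    ((zetaPow r (WreathG.pairing g v.1)) •
      Finsupp.lsingle (⟨WreathG.aconj g.p v.1, v.2.aconj g.p⟩ : AbsInv r n))

/-!
An absolute involution `v` preserves every color class `{j | z_j(v) = i}`, and `|v|` restricts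
there to an involution with `fix_i(v)` fixed and `2 pair_i(v)` moved points. Involutions of
finite sets with equally many fixed and equally many moved points have the same cycle type
`2^k 1^m`, hence are conjugate by a bijection; such bijections of the color classes glue to the
required `τ`. Conversely, `τ` carries the fixed and moved points of each color of `v` to those
of `τ·v·τ⁻¹`.
-/

namespace Equiv.Perm

variable {α β : Type*}

theorem card_support_eq_two_mul_of_sq_eq_one [Fintype α] [DecidableEq α] {σ : Perm α}
    (hσ : σ ^ 2 = 1) : σ.support.card = 2 * σ.cycleType.card := by
  have : Fact (Nat.Prime 2) := ⟨Nat.prime_two⟩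
  rw [← sum_cycleType, cycleType_of_pow_prime_eq_one hσ, Multiset.sum_replicate,
    Multiset.card_replicate, smul_eq_mul, mul_comm]

theorem isConj_of_sq_eq_one [Fintype α] [DecidableEq α] {σ τ : Perm α} (hσ : σ ^ 2 = 1)
    (hτ : τ ^ 2 = 1) (h : σ.support.card = τ.support.card) : IsConj σ τ := by
  have : Fact (Nat.Prime 2) := ⟨Nat.prime_two⟩
  rw [card_support_eq_two_mul_of_sq_eq_one hσ, card_support_eq_two_mul_of_sq_eq_one hτ] at h
  rw [isConj_iff_cycleType_eq, cycleType_of_pow_prime_eq_one hσ,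
    cycleType_of_pow_prime_eq_one hτ, Nat.eq_of_mul_eq_mul_left two_pos h]

theorem card_support_eq_natCard [Fintype α] [DecidableEq α] (σ : Perm α) :
    σ.support.card = Nat.card {x // σ x ≠ x} := by
  rw [Nat.card_eq_fintype_card, Fintype.card_subtype]
  rfl

theorem exists_equiv_conj_of_sq_eq_one [Finite α] [Finite β] {σ : Perm α} {τ : Perm β}
    (hσ : σ ^ 2 = 1) (hτ : τ ^ 2 = 1)
    (hfix : Nat.card {x // σ x = x} = Nat.card {y // τ y = y})
    (hmov : Nat.card {x // σ x ≠ x} = Nat.card {y // τ y ≠ y}) :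
    ∃ e : α ≃ β, ∀ x, e (σ x) = τ (e x) := by
  classical
  have hcard : Nat.card α = Nat.card β := by
    rw [← Nat.card_congr (Equiv.sumCompl fun x => σ x = x),
      ← Nat.card_congr (Equiv.sumCompl fun y => τ y = y), Nat.card_sum, Nat.card_sum, hfix, hmov]
  obtain ⟨e₀⟩ := Finite.card_eq.mp hcard
  cases nonempty_fintype β
  have hσ' : e₀.permCongr σ ^ 2 = 1 := by
    rw [sq, ← permCongr_mul, ← sq, hσ]
    exact permCongr_refl e₀
  have hsupp : (e₀.permCongr σ).support.card = τ.support.card := by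
    rw [card_support_eq_natCard, card_support_eq_natCard, ← hmov]
    exact (Nat.card_congr (e₀.subtypeEquiv fun x => by simp)).symm
  obtain ⟨c, hc⟩ := isConj_iff.mp (isConj_of_sq_eq_one hσ' hτ hsupp)
  refine ⟨e₀.trans c, fun x => ?_⟩
  simpa using congr($hc (c (e₀ x)))

theorem card_subtypePerm_fixed {p : α → Prop} (σ : Perm α) (h : ∀ x, p (σ x) ↔ p x) :
    Nat.card {x // σ.subtypePerm h x = x} = Nat.card {a // σ a = a ∧ p a} :=
  Nat.card_congr <| (Equiv.subtypeEquivRight fun _ => Subtype.ext_iff).trans <|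
    (Equiv.subtypeSubtypeEquivSubtypeInter p (fun a => σ a = a)).trans
      (Equiv.subtypeEquivRight fun _ => and_comm)

theorem card_subtypePerm_moved {p : α → Prop} (σ : Perm α) (h : ∀ x, p (σ x) ↔ p x) :
    Nat.card {x // σ.subtypePerm h x ≠ x} = Nat.card {a // σ a ≠ a ∧ p a} :=
  Nat.card_congr <| (Equiv.subtypeEquivRight fun _ => Subtype.ext_iff.not).trans <|
    (Equiv.subtypeSubtypeEquivSubtypeInter p (fun a => σ a ≠ a)).trans
      (Equiv.subtypeEquivRight fun _ => and_comm)

theorem exists_equiv_conj_of_conj_on_fibers {γ : Type*} {σ : Perm α} {τ : Perm β}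
    {f : α → γ} {g : β → γ} (hf : ∀ x, f (σ x) = f x) (hg : ∀ y, g (τ y) = g y)
    (h : ∀ c, ∃ e : {x // f x = c} ≃ {y // g y = c}, ∀ x,
      e (σ.subtypePerm (fun x => by rw [hf]) x) = τ.subtypePerm (fun y => by rw [hg]) (e x)) :
    ∃ e : α ≃ β, (∀ x, g (e x) = f x) ∧ ∀ x, e (σ x) = τ (e x) := by
  choose E hE using h
  refine ⟨ofFiberEquiv E, ofFiberEquiv_map E, fun x => ?_⟩
  have fiber_congr : ∀ c (hc : f (σ x) = c),
      (E (f (σ x)) ⟨σ x, rfl⟩ : β) = E c ⟨σ x, hc⟩ := by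
    rintro c rfl; rfl
  exact (fiber_congr _ (hf x)).trans congr(Subtype.val $(hE (f x) ⟨x, rfl⟩))

end Equiv.Perm

namespace WreathG

variable {r n : ℕ} {v w : WreathG r n}

theorem IsAbsInv.p_p_apply (hv : v.IsAbsInv) (j : Fin n) : v.p (v.p j) = j := by
  simpa [sq] using congr($(hv.1) j)

theorem IsAbsInv.z_p_apply (hv : v.IsAbsInv) (j : Fin n) : v.z (v.p j) = v.z j :=
  congrFun hv.2 j

@[simp] theorem aconj_z_apply (τ : Equiv.Perm (Fin n)) (v : WreathG r n) (j : Fin n) :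
    (aconj τ v).z (τ j) = v.z j := by
  simp [aconj]

@[simp] theorem aconj_p_apply (τ : Equiv.Perm (Fin n)) (v : WreathG r n) (j : Fin n) :
    (aconj τ v).p (τ j) = τ (v.p j) := by
  simp [aconj]

theorem eq_aconj_of_apply {τ : Equiv.Perm (Fin n)} (hz : ∀ j, w.z (τ j) = v.z j)
    (hp : ∀ j, w.p (τ j) = τ (v.p j)) : w = aconj τ v := by
  ext j
  · simpa [aconj] using hz (τ.symm j)
  · simpa [aconj] using congr(Fin.val $(hp (τ.symm j)))

def movc (v : WreathG r n) (i : ZMod r) : ℕ :=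
  Nat.card {j : Fin n // v.p j ≠ j ∧ v.z j = i}

theorem fixc_aconj (τ : Equiv.Perm (Fin n)) (v : WreathG r n) (i : ZMod r) :
    fixc (aconj τ v) i = fixc v i :=
  (Nat.card_congr (τ.subtypeEquiv fun j => by simp)).symm

theorem movc_aconj (τ : Equiv.Perm (Fin n)) (v : WreathG r n) (i : ZMod r) :
    movc (aconj τ v) i = movc v i :=
  (Nat.card_congr (τ.subtypeEquiv fun j => by simp)).symm

theorem IsAbsInv.pairc_eq_card_lt (hv : v.IsAbsInv) (i : ZMod r) :
    pairc v i = Nat.card {j // j < v.p j ∧ v.z j = i} :=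
  Nat.card_congr
    { toFun := fun q => ⟨q.1.1, q.2.2.1 ▸ q.2.1, q.2.2.2.1⟩
      invFun := fun j => ⟨(j, v.p j), j.2.1, rfl, j.2.2, (hv.z_p_apply j).trans j.2.2⟩
      left_inv := by rintro ⟨⟨a, b⟩, hab, hpab : v.p a = b, hz⟩; subst hpab; rfl
      right_inv := fun _ => rfl }

theorem IsAbsInv.movc_eq_two_mul_pairc (hv : v.IsAbsInv) (i : ZMod r) :
    movc v i = 2 * pairc v i := by
  classical
  let lower := {j // j < v.p j ∧ v.z j = i}
  have hsplit : {j // v.p j ≠ j ∧ v.z j = i} ≃ lower ⊕ {j // v.p j < j ∧ v.z j = i} :=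
    (Equiv.subtypeEquivRight fun j => by rw [ne_iff_lt_or_gt]; tauto).trans
      (subtypeOrEquiv _ _ fun _ hlt hgt j hj => ((hlt j hj).1.asymm (hgt j hj).1))
  have hswap : {j // v.p j < j ∧ v.z j = i} ≃ lower :=
    v.p.subtypeEquiv fun j => by rw [hv.p_p_apply, hv.z_p_apply]
  rw [movc, Nat.card_congr hsplit, Nat.card_sum, Nat.card_congr hswap, hv.pairc_eq_card_lt,
    two_mul]

theorem IsAbsInv.exists_aconj_of_fixc_movc (hv : v.IsAbsInv) (hw : w.IsAbsInv)
    (hfix : ∀ i, fixc v i = fixc w i) (hmov : ∀ i, movc v i = movc w i) :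
    ∃ τ, w = WreathG.aconj τ v := by
  open Equiv.Perm in
  obtain ⟨τ, hz, hp⟩ := exists_equiv_conj_of_conj_on_fibers hv.z_p_apply hw.z_p_apply fun i =>
    exists_equiv_conj_of_sq_eq_one (by ext x; simp [sq, hv.p_p_apply])
      (by ext x; simp [sq, hw.p_p_apply])
      (by rw [card_subtypePerm_fixed, card_subtypePerm_fixed]; exact hfix i)
      (by rw [card_subtypePerm_moved, card_subtypePerm_moved]; exact hmov i)
  exact ⟨τ, eq_aconj_of_apply hz fun j => (hp j).symm⟩

theorem IsAbsInv.exists_aconj_iff (hv : v.IsAbsInv) (hw : w.IsAbsInv) :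
    (∃ τ, w = WreathG.aconj τ v) ↔ ∀ i, fixc v i = fixc w i ∧ pairc v i = pairc w i := by
  constructor
  · rintro ⟨τ, rfl⟩ i
    refine ⟨(fixc_aconj τ v i).symm, ?_⟩
    have := movc_aconj τ v i
    rw [hv.movc_eq_two_mul_pairc, (hv.aconj τ).movc_eq_two_mul_pairc] at this
    omega
  · intro h
    refine hv.exists_aconj_of_fixc_movc hw (fun i => (h i).1) fun i => ?_
    rw [hv.movc_eq_two_mul_pairc, hw.movc_eq_two_mul_pairc, (h i).2]

end WreathG

theorem sConjugate_iff_same_statistics_B_general (n : ℕ) (v w : WreathG 2 n)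
    (hv : WreathG.IsAbsInv v) (hw : WreathG.IsAbsInv w) :
    (∃ τ : Equiv.Perm (Fin n), w = WreathG.aconj τ v) ↔
      (WreathG.fixc v 0 = WreathG.fixc w 0 ∧ WreathG.fixc v 1 = WreathG.fixc w 1 ∧
       WreathG.pairc v 0 = WreathG.pairc w 0 ∧ WreathG.pairc v 1 = WreathG.pairc w 1) := by
  rw [hv.exists_aconj_iff hw]
  constructor
  · intro h
    exact ⟨(h 0).1, (h 1).1, (h 0).2, (h 1).2⟩
  · rintro ⟨hfix₀, hfix₁, hpair₀, hpair₁⟩ i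
    fin_cases i
    exacts [⟨hfix₀, hpair₀⟩, ⟨hfix₁, hpair₁⟩]

/-- Two involutions of `B_n = G(2,n)` are `S_n`-conjugate if and only if
they have the same statistics `fix_0`, `fix_1`, `pair_0`, `pair_1`. -/
theorem sConjugate_iff_same_statistics_B (n : ℕ) (hn : 0 < n) (v w : WreathG 2 n)
    (hv : WreathG.IsAbsInv v) (hw : WreathG.IsAbsInv w) :
    (∃ τ : Equiv.Perm (Fin n), w = WreathG.aconj τ v) ↔
      (WreathG.fixc v 0 = WreathG.fixc w 0 ∧ WreathG.fixc v 1 = WreathG.fixc w 1 ∧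
       WreathG.pairc v 0 = WreathG.pairc w 0 ∧ WreathG.pairc v 1 = WreathG.pairc w 1) :=
  sConjugate_iff_same_statistics_B_general n v w hv hw
end
end

section
/- Let m ≥ 1 and let τ be the fixed-point-free involution of {1,…,2m} with τ(2k−1) = 2k for k = 1,…,m. Let p_0, p_1 ∈ ℕ with p_0 + p_1 = m, and let σ be a permutation of {1,…,2m} such that σ commutes with τ (equivalently, σ(i+1) = σ(i) ± 1 for every odd i with 0 < i < 2m) and σ maps {1,…,2p_0} onto itself. Then inv(σ) ≡ #{{i,j} : τ(i) = j ≠ i and {i,j} is an inversion of σ} (mod 2). -/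
/-!
The map `(i, j) ↦ (τ i, τ j)` sends an inversion of `σ` that is not a pair of `τ` to another
such inversion: `τ` only swaps the two elements of each block `{2k, 2k+1}`, so it preserves the
order of elements lying in different blocks, and since `σ` commutes with `τ` the same applies to
the values `σ i`, `σ j`. This map is a fixed-point-free involution, so the inversions that are
not pairs of `τ` are even in number.
-/

open Equiv Finset Function

lemma Finset.even_card_of_involution {α : Type*} {s : Finset α} (g : α → α)
    (hg_mem : ∀ a ∈ s, g a ∈ s) (hg_invol : ∀ a ∈ s, g (g a) = a) (hg_ne : ∀ a ∈ s, g a ≠ a) :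
    Even #s := by
  rw [← ZMod.natCast_eq_zero_iff_even, card_eq_sum_ones, Nat.cast_sum, Nat.cast_one]
  exact sum_involution (fun a _ => g a) (fun _ _ => by decide) (fun a ha _ => hg_ne a ha)
    hg_mem hg_invol

section LinearOrder

variable {α : Type*} [LinearOrder α] [Fintype α] {τ σ : Perm α}

theorem even_card_inversions_not_pair (hτ : Involutive τ) (hτ_ne : ∀ i, τ i ≠ i)
    (hτ_lt : ∀ i j, i < j → τ i ≠ j → τ i < τ j) (hcomm : Commute σ τ) :
    Even #{q : α × α | q.1 < q.2 ∧ σ q.2 < σ q.1 ∧ τ q.1 ≠ q.2} := by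
  have hστ : ∀ i, σ (τ i) = τ (σ i) := fun i => DFunLike.congr_fun hcomm.eq i
  refine even_card_of_involution (fun q => (τ q.1, τ q.2)) ?_ ?_ ?_
  · rintro ⟨i, j⟩ hq
    simp only [mem_filter, mem_univ, true_and] at hq ⊢
    obtain ⟨hij, hσij, hpair⟩ := hq
    have hσpair : τ (σ j) ≠ σ i := by
      rw [← hστ]
      exact fun h => hpair (by rw [← σ.injective h, hτ])
    refine ⟨hτ_lt i j hij hpair, ?_, fun h => hpair (τ.injective h)⟩
    rw [hστ, hστ]
    exact hτ_lt _ _ hσij hσpair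
  · rintro ⟨i, j⟩ -
    simp only [hτ i, hτ j]
  · rintro ⟨i, j⟩ - h
    exact hτ_ne i (congrArg Prod.fst h)

theorem card_inversions_modEq_card_pair_inversions (hτ : Involutive τ) (hτ_ne : ∀ i, τ i ≠ i)
    (hτ_lt : ∀ i j, i < j → τ i ≠ j → τ i < τ j) (hcomm : Commute σ τ) :
    #{q : α × α | q.1 < q.2 ∧ σ q.2 < σ q.1} ≡
      #{q : α × α | q.1 < q.2 ∧ σ q.2 < σ q.1 ∧ τ q.1 = q.2} [MOD 2] := by
  obtain ⟨r, hr⟩ := even_card_inversions_not_pair hτ hτ_ne hτ_lt hcomm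
  have hsplit := card_filter_add_card_filter_not
    (s := ({q : α × α | q.1 < q.2 ∧ σ q.2 < σ q.1} : Finset _)) (fun q => τ q.1 = q.2)
  simp only [filter_filter, and_assoc, ← ne_eq, hr] at hsplit
  unfold Nat.ModEq
  omega

end LinearOrder

section AdjacentPairs

variable {n : ℕ} {τ : Perm (Fin n)}

lemma involutive_of_div_two_eq (hτ : ∀ i, (τ i : ℕ) / 2 = i / 2 ∧ τ i ≠ i) : Involutive τ := by
  intro i
  have h₁ := hτ i
  have h₂ := hτ (τ i)
  simp only [ne_eq, Fin.ext_iff] at h₁ h₂ ⊢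
  omega

lemma apply_lt_apply_of_div_two_eq (hτ : ∀ i, (τ i : ℕ) / 2 = i / 2 ∧ τ i ≠ i) {i j : Fin n}
    (hij : i < j) (hpair : τ i ≠ j) : τ i < τ j := by
  have hi := hτ i
  have hj := hτ j
  simp only [ne_eq, Fin.ext_iff, Fin.lt_def] at hi hj hij hpair ⊢
  omega

end AdjacentPairs

lemma div_two_eq_of_swaps_adjacent {m : ℕ} {τ : Perm (Fin (2 * m))}
    (hτ₁ : ∀ k (hk : k < m), τ ⟨2 * k, by omega⟩ = ⟨2 * k + 1, by omega⟩)
    (hτ₂ : ∀ k (hk : k < m), τ ⟨2 * k + 1, by omega⟩ = ⟨2 * k, by omega⟩)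
    (i : Fin (2 * m)) : (τ i : ℕ) / 2 = i / 2 ∧ τ i ≠ i := by
  have hk : (i : ℕ) / 2 < m := by omega
  rcases Nat.mod_two_eq_zero_or_one i with h | h
  · have hτi := hτ₁ (i / 2) hk
    rw [show (⟨2 * (i / 2), _⟩ : Fin (2 * m)) = i from Fin.ext (by simp only; omega)] at hτi
    simp only [hτi, ne_eq, Fin.ext_iff]
    omega
  · have hτi := hτ₂ (i / 2) hk
    rw [show (⟨2 * (i / 2) + 1, _⟩ : Fin (2 * m)) = i from Fin.ext (by simp only; omega)] at hτi
    simp only [hτi, ne_eq, Fin.ext_iff]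
    omega

theorem inv_congr_invPairs_mod_two (m : ℕ)
    (τ σ : Equiv.Perm (Fin (2 * m)))
    (hτ₁ : ∀ k : Fin m, τ ⟨2 * k.val, by have := k.isLt; omega⟩ =
      ⟨2 * k.val + 1, by have := k.isLt; omega⟩)
    (hτ₂ : ∀ k : Fin m, τ ⟨2 * k.val + 1, by have := k.isLt; omega⟩ =
      ⟨2 * k.val, by have := k.isLt; omega⟩)
    (hcomm : σ * τ = τ * σ) :
    Nat.card {q : Fin (2 * m) × Fin (2 * m) // q.1 < q.2 ∧ σ q.2 < σ q.1} ≡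
      Nat.card {q : Fin (2 * m) × Fin (2 * m) //
        q.1 < q.2 ∧ τ q.1 = q.2 ∧ q.2 ≠ q.1 ∧ σ q.2 < σ q.1} [MOD 2] := by
  have hτ := div_two_eq_of_swaps_adjacent (fun k hk => hτ₁ ⟨k, hk⟩) (fun k hk => hτ₂ ⟨k, hk⟩)
  have hpairs : ∀ q : Fin (2 * m) × Fin (2 * m),
      (q.1 < q.2 ∧ τ q.1 = q.2 ∧ q.2 ≠ q.1 ∧ σ q.2 < σ q.1) ↔
        (q.1 < q.2 ∧ σ q.2 < σ q.1 ∧ τ q.1 = q.2) :=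
    fun q => ⟨fun ⟨h₁, h₂, _, h₄⟩ => ⟨h₁, h₄, h₂⟩, fun ⟨h₁, h₂, h₃⟩ => ⟨h₁, h₃, h₁.ne', h₂⟩⟩
  simp only [Nat.card_eq_fintype_card, Fintype.card_subtype, hpairs]
  exact card_inversions_modEq_card_pair_inversions (involutive_of_div_two_eq hτ)
    (fun i => (hτ i).2) (fun _ _ => apply_lt_apply_of_div_two_eq hτ) hcomm
end
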